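/- Let (B, Θ) be a category with nullhomotopies and (T, F) a Θ-torsion theory. Then for an object X of B the following are equivalent: (a) X ∈ T ∩ F; (b) Θ(id_X) is a singleton; (c) X is Θ-trivial, i.e. Θ(id_X) ≠ ∅. -/

import Mathlib

open CategoryTheory

universe w v u

/-- A structure of nullhomotopies on a category `B`: a set of nullhomotopies on each arrow,
together with associative and unital pre- and post-composition actions. -/
structure NullStruct (B : Type u) [Category.{v} B] where
  null : ∀ {X Y : B}, (X ⟶ Y) → Type w
  pre : ∀ {W X Y : B} (f : W ⟶ X) {g : X ⟶ Y}, null g → null (f ≫ g)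
  post : ∀ {X Y Z : B} {g : X ⟶ Y} (h : Y ⟶ Z), null g → null (g ≫ h)
  pre_pre : ∀ {V W X Y : B} (f' : V ⟶ W) (f : W ⟶ X) {g : X ⟶ Y} (φ : null g),
    HEq (pre (f' ≫ f) φ) (pre f' (pre f φ))
  post_post : ∀ {X Y Z Z' : B} {g : X ⟶ Y} (h : Y ⟶ Z) (h' : Z ⟶ Z') (φ : null g),
    HEq (post (h ≫ h') φ) (post h' (post h φ))
  pre_post : ∀ {W X Y Z : B} (f : W ⟶ X) {g : X ⟶ Y} (h : Y ⟶ Z) (φ : null g),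
    HEq (pre f (post h φ)) (post h (pre f φ))
  pre_id : ∀ {X Y : B} {g : X ⟶ Y} (φ : null g), HEq (pre (𝟙 X) φ) φ
  post_id : ∀ {X Y : B} {g : X ⟶ Y} (φ : null g), HEq (post (𝟙 Y) φ) φ

variable {B : Type u} [Category.{v} B]

/-- `(N, n, ν)` is a homotopy kernel of `g` with respect to `Θ`. -/
def IsHKernel (Θ : NullStruct.{w} B) {N X Y : B} (g : X ⟶ Y) (n : N ⟶ X)
    (ν : Θ.null (n ≫ g)) : Prop :=
  ∀ {W : B} (f : W ⟶ X) (φ : Θ.null (f ≫ g)),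
    ∃! f' : W ⟶ N, f' ≫ n = f ∧ HEq (Θ.pre f' ν) φ

/-- `(Q, q, θ)` is a homotopy cokernel of `g` with respect to `Θ`. -/
def IsHCokernel (Θ : NullStruct.{w} B) {X Y Q : B} (g : X ⟶ Y) (q : Y ⟶ Q)
    (θ : Θ.null (g ≫ q)) : Prop :=
  ∀ {W : B} (h : Y ⟶ W) (ψ : Θ.null (g ≫ h)),
    ∃! h' : Q ⟶ W, q ≫ h' = h ∧ HEq (Θ.post h' θ) ψ

/-- `T` is `Θ`-orthogonal to `F`: each `Θ(h)` is a singleton for `h : T ⟶ F`. -/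
def NullOrth (Θ : NullStruct.{w} B) (T F : B) : Prop :=
  ∀ h : T ⟶ F, Nonempty (Θ.null h) ∧ Subsingleton (Θ.null h)

/-- A homotopy torsion theory with respect to a structure of nullhomotopies `Θ`. -/
structure HTorsionTheory (Θ : NullStruct.{w} B) where
  T : Set B
  F : Set B
  repleteT : ∀ {X Y : B}, (X ≅ Y) → X ∈ T → Y ∈ T
  repleteF : ∀ {X Y : B}, (X ≅ Y) → X ∈ F → Y ∈ F
  pres : ∀ X : B, ∃ (TX FX : B) (t : TX ⟶ X) (f : X ⟶ FX) (ξ : Θ.null (t ≫ f)),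
    TX ∈ T ∧ FX ∈ F ∧ IsHKernel Θ f t ξ ∧ IsHCokernel Θ t f ξ
  orth : ∀ {t f : B}, t ∈ T → f ∈ F → NullOrth Θ t f

/-! A nullhomotopy `φ ∈ Θ(𝟙 X)` whiskers to nullhomotopies of `f_X` and of `t_X`, so the universal
properties of the presentation give one-sided inverses of `t_X` and `f_X`. Since `T X ⊥ F X`, all
nullhomotopies of `t_X ≫ f_X` coincide, so the uniqueness clauses make these inverses two-sided:
`X ≅ T X` and `X ≅ F X`. Conversely, `X ∈ T ∩ F` gives `X ⊥ X`, in particular (b). -/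

lemma NullStruct.heq_of_subsingleton (Θ : NullStruct.{w} B) {X Y : B} {g a b : X ⟶ Y}
    [Subsingleton (Θ.null g)] (ha : a = g) (hb : b = g) (α : Θ.null a) (β : Θ.null b) :
    HEq α β := by
  subst ha hb
  exact heq_of_eq (Subsingleton.elim α β)

namespace IsHKernel

variable {Θ : NullStruct.{w} B} {N X Y : B} {g : X ⟶ Y} {n : N ⟶ X} {ν : Θ.null (n ≫ g)}

lemma hom_ext (hk : IsHKernel Θ g n ν) {W : B} {a b : W ⟶ N} (h : a ≫ n = b ≫ n)
    (hν : HEq (Θ.pre a ν) (Θ.pre b ν)) : a = b := by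
  let β : Θ.null ((b ≫ n) ≫ g) := cast (by rw [Category.assoc]) (Θ.pre b ν)
  have hβ : HEq (Θ.pre b ν) β := (cast_heq _ _).symm
  obtain ⟨_, -, huniq⟩ := hk (b ≫ n) β
  exact (huniq a ⟨h, hν.trans hβ⟩).trans (huniq b ⟨rfl, hβ⟩).symm

lemma isIso (hk : IsHKernel Θ g n ν) (hg : Nonempty (Θ.null g))
    [Subsingleton (Θ.null (n ≫ g))] : IsIso n := by
  obtain ⟨φ⟩ := hg
  obtain ⟨s, ⟨hs, -⟩, -⟩ := hk (𝟙 X) (Θ.pre (𝟙 X) φ)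
  refine ⟨s, hk.hom_ext (by rw [Category.assoc, hs, Category.comp_id, Category.id_comp]) ?_, hs⟩
  exact Θ.heq_of_subsingleton (by rw [Category.assoc, reassoc_of% hs])
    (Category.id_comp _) _ _

end IsHKernel

namespace IsHCokernel

variable {Θ : NullStruct.{w} B} {X Y Q : B} {g : X ⟶ Y} {q : Y ⟶ Q} {θ : Θ.null (g ≫ q)}

lemma hom_ext (hc : IsHCokernel Θ g q θ) {W : B} {a b : Q ⟶ W} (h : q ≫ a = q ≫ b)
    (hθ : HEq (Θ.post a θ) (Θ.post b θ)) : a = b := by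
  let β : Θ.null (g ≫ q ≫ b) := cast (by rw [Category.assoc]) (Θ.post b θ)
  have hβ : HEq (Θ.post b θ) β := (cast_heq _ _).symm
  obtain ⟨_, -, huniq⟩ := hc (q ≫ b) β
  exact (huniq a ⟨h, hθ.trans hβ⟩).trans (huniq b ⟨rfl, hβ⟩).symm

lemma isIso (hc : IsHCokernel Θ g q θ) (hg : Nonempty (Θ.null g))
    [Subsingleton (Θ.null (g ≫ q))] : IsIso q := by
  obtain ⟨φ⟩ := hg
  obtain ⟨r, ⟨hr, -⟩, -⟩ := hc (𝟙 Y) (Θ.post (𝟙 Y) φ)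
  refine ⟨r, hr, hc.hom_ext (by rw [reassoc_of% hr, Category.comp_id]) ?_⟩
  exact Θ.heq_of_subsingleton (by rw [Category.assoc, reassoc_of% hr])
    (Category.comp_id _) _ _

end IsHCokernel

lemma HTorsionTheory.mem_inter_of_null {Θ : NullStruct.{w} B} (tt : HTorsionTheory Θ) {X : B}
    (φ : Θ.null (𝟙 X)) : X ∈ tt.T ∩ tt.F := by
  obtain ⟨TX, FX, t, f, ξ, hT, hF, hk, hc⟩ := tt.pres X
  have : Subsingleton (Θ.null (t ≫ f)) := (tt.orth hT hF (t ≫ f)).2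
  have : IsIso t := hk.isIso ⟨Category.id_comp f ▸ Θ.post f φ⟩
  have : IsIso f := hc.isIso ⟨Category.comp_id t ▸ Θ.pre t φ⟩
  exact ⟨tt.repleteT (asIso t) hT, tt.repleteF (asIso f).symm hF⟩

/-- In a Θ-torsion theory, for an object `X` the following are equivalent:
(a) `X ∈ T ∩ F`; (b) `Θ(𝟙 X)` is a singleton; (c) `X` is Θ-trivial (`Θ(𝟙 X)` is nonempty). -/
theorem stmt19 {Θ : NullStruct.{w} B} (tt : HTorsionTheory Θ) (X : B) :
    (X ∈ tt.T ∩ tt.F ↔ (Nonempty (Θ.null (𝟙 X)) ∧ Subsingleton (Θ.null (𝟙 X)))) ∧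
    ((Nonempty (Θ.null (𝟙 X)) ∧ Subsingleton (Θ.null (𝟙 X))) ↔ Nonempty (Θ.null (𝟙 X))) := by
  have singleton_of_mem : X ∈ tt.T ∩ tt.F →
      Nonempty (Θ.null (𝟙 X)) ∧ Subsingleton (Θ.null (𝟙 X)) :=
    fun ⟨hT, hF⟩ => tt.orth hT hF (𝟙 X)
  refine ⟨⟨singleton_of_mem, fun ⟨⟨φ⟩, _⟩ => tt.mem_inter_of_null φ⟩, ⟨And.left, ?_⟩⟩
  rintro ⟨φ⟩
  exact singleton_of_mem (tt.mem_inter_of_null φ)
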